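/- For every block-parallel update schedule μ ∈ BP_n, the blocks of the sequence φ(μ) = (W_0,…,W_{ℓ−1}) are pairwise distinct; consequently the ℓ cyclic shifts σ^i(φ(μ)), for i ∈ {0,…,ℓ−1}, are pairwise distinct sequences (so the ≡_⋆-equivalence class of any element of BP_n/≡_0 generated from a partition λ of n contains exactly lcm(λ) elements). -/

import Mathlib

open Finset Nat

/-- `μ` is a block-parallel update schedule (partitioned order) of size `n`:
a finite set of nonempty lists (o-blocks) of elements of `Fin n` such that
every element of `Fin n` occurs exactly once in exactly one o-block. -/
def IsBP (n : ℕ) (μ : Finset (List (Fin n))) : Prop :=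
  (∀ S ∈ μ, S ≠ []) ∧ ∀ i : Fin n, (μ.sum fun S => S.count i) = 1

/-- The number of substeps `ℓ = lcm` of the o-block lengths. -/
def bpLen {n : ℕ} (μ : Finset (List (Fin n))) : ℕ := μ.lcm List.length

/-- The block updated at substep `t`: `W_t = { S[t mod |S|] : S ∈ μ }`. -/
def blockAt {n : ℕ} (μ : Finset (List (Fin n))) (t : ℕ) : Finset (Fin n) :=
  μ.biUnion fun S => (S[t % S.length]?).toFinset

/-- `φ(μ)`: the rewriting of a block-parallel update schedule as a sequence of blocks. -/
def phiBP {n : ℕ} (μ : Finset (List (Fin n))) : List (Finset (Fin n)) :=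
  (List.range (bpLen μ)).map (blockAt μ)

/-! If `W_s = W_t`, the entry `S[s mod |S|]` of an o-block `S` lies in `W_t`; the o-blocks are
disjoint, so it is `S[t mod |S|]`, and `S` has no repetitions, so `s ≡ t mod |S|`. Hence
`s ≡ t mod ℓ`, and the blocks `W_0, …, W_{ℓ-1}` are distinct. Rotations of a duplicate-free list
by different amounts below its length are different. -/

theorem Nat.ModEq.finset_lcm {ι : Type*} {s : Finset ι} {f : ι → ℕ} {a b : ℕ}
    (h : ∀ i ∈ s, a ≡ b [MOD f i]) : a ≡ b [MOD s.lcm f] :=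
  Nat.modEq_of_dvd <| Int.natCast_dvd.mpr <| Finset.lcm_dvd fun i hi ↦
    Int.natCast_dvd.mp (h i hi).dvd

theorem List.Nodup.eq_of_rotate_eq {α : Type*} {l : List α} (hl : l.Nodup) {i j : ℕ}
    (hi : i < l.length) (hj : j < l.length) (h : l.rotate i = l.rotate j) : i = j := by
  simpa [Nat.mod_eq_of_lt, hi, hj, List.ne_nil_of_length_pos (i.zero_le.trans_lt hi)] using
    hl.rotate_congr_iff.mp h

theorem mem_blockAt {n : ℕ} {μ : Finset (List (Fin n))} {t : ℕ} {x : Fin n} :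
    x ∈ blockAt μ t ↔ ∃ S ∈ μ, S[t % S.length]? = some x := by
  simp [blockAt]

theorem getElem_mem_blockAt {n : ℕ} {μ : Finset (List (Fin n))} {t : ℕ} {S : List (Fin n)}
    (hS : S ∈ μ) (ht : t % S.length < S.length) : S[t % S.length] ∈ blockAt μ t :=
  mem_blockAt.mpr ⟨S, hS, List.getElem?_eq_getElem ht⟩

namespace IsBP

variable {n : ℕ} {μ : Finset (List (Fin n))}

theorem count_le_one (hμ : IsBP n μ) {S : List (Fin n)} (hS : S ∈ μ) (x : Fin n) :
    S.count x ≤ 1 :=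
  hμ.2 x ▸ Finset.single_le_sum (fun _ _ ↦ Nat.zero_le _) hS

theorem nodup (hμ : IsBP n μ) {S : List (Fin n)} (hS : S ∈ μ) : S.Nodup :=
  List.nodup_iff_count_le_one.mpr (hμ.count_le_one hS)

theorem eq_of_mem_of_mem (hμ : IsBP n μ) {S S' : List (Fin n)} (hS : S ∈ μ) (hS' : S' ∈ μ)
    {x : Fin n} (hx : x ∈ S) (hx' : x ∈ S') : S = S' := by
  by_contra hne
  have hrest : 0 < (μ.erase S).sum fun T ↦ T.count x :=
    (List.count_pos_iff.mpr hx').trans_le <|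
      Finset.single_le_sum (fun _ _ ↦ Nat.zero_le _) (Finset.mem_erase.mpr ⟨Ne.symm hne, hS'⟩)
  have htotal := hμ.2 x
  rw [← Finset.add_sum_erase μ _ hS] at htotal
  have := List.count_pos_iff.mpr hx
  omega

theorem length_pos (hμ : IsBP n μ) {S : List (Fin n)} (hS : S ∈ μ) : 0 < S.length :=
  List.length_pos_iff.mpr (hμ.1 S hS)

theorem modEq_of_blockAt_eq (hμ : IsBP n μ) {s t : ℕ} (hst : blockAt μ s = blockAt μ t)
    {S : List (Fin n)} (hS : S ∈ μ) : s ≡ t [MOD S.length] := by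
  have hs := Nat.mod_lt s (hμ.length_pos hS)
  have hmem : S[s % S.length] ∈ blockAt μ t := hst ▸ getElem_mem_blockAt hS hs
  obtain ⟨S', hS', hx⟩ := mem_blockAt.mp hmem
  have ht' := Nat.mod_lt t (hμ.length_pos hS')
  rw [List.getElem?_eq_getElem ht', Option.some_inj] at hx
  obtain rfl : S = S' :=
    hμ.eq_of_mem_of_mem hS hS' (List.getElem_mem hs) (hx ▸ List.getElem_mem ht')
  exact (hμ.nodup hS).getElem_inj_iff.mp hx.symm

theorem blockAt_injOn (hμ : IsBP n μ) : Set.InjOn (blockAt μ) (Set.Iio (bpLen μ)) :=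
  fun _ hs _ ht hst ↦
    (Nat.ModEq.finset_lcm fun _ hS ↦ hμ.modEq_of_blockAt_eq hst hS).eq_of_lt_of_lt hs ht

theorem nodup_phiBP (hμ : IsBP n μ) : (phiBP μ).Nodup :=
  List.nodup_range.map_on fun _ hs _ ht ↦
    hμ.blockAt_injOn (List.mem_range.mp hs) (List.mem_range.mp ht)

end IsBP

/-- The blocks of `φ(μ)` are pairwise distinct; consequently the cyclic shifts
`σ^i(φ(μ))`, `i ∈ {0,…,ℓ−1}`, are pairwise distinct sequences. -/
theorem phi_blocks_pairwise_distinct (n : ℕ) (μ : Finset (List (Fin n))) (hμ : IsBP n μ) :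
    (phiBP μ).Nodup ∧
      ∀ i < (phiBP μ).length, ∀ j < (phiBP μ).length,
        (phiBP μ).rotate i = (phiBP μ).rotate j → i = j :=
  ⟨hμ.nodup_phiBP, fun _ hi _ hj ↦ hμ.nodup_phiBP.eq_of_rotate_eq hi hj⟩
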